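/- arXiv:1605.04491 — 3 statements merged into one kernel-verified Lean document; each statement's English description precedes it below -/
import Mathlib

section
/- For any rooted tree T with n vertices and any integer k with 2 ≤ k ≤ n, there exists a set M of at most 3k−5 vertices such that every connected component of T minus M has at most n/k vertices. -/
/-!
Put `t = n / k`. Call `B ⊆ S` a branch of `S` at `w ∈ B` if every edge from `B \ {w}` to
`S \ {w}` stays inside `B`. In a forest, `w` is adjacent to at most one vertex `w'` of any
component `D` of `B \ {w}`, so `D` is again a branch, at `w'`. Descending in this way from a
component of more than `t` vertices, we reach a branch `B` at `w` with more than `t` vertices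
all of whose pieces after deleting `w` have at most `t` vertices. Cut `w`, discard `B` and
recurse on the rest: every cut vertex pays for more than `t` discarded vertices, so fewer than
`k` vertices are cut, and `k - 1 ≤ 3k - 5` for `k ≥ 2`.
-/

namespace SimpleGraph

open Finset

variable {V : Type*} {G : SimpleGraph V}

def ComponentsBoundedBy (G : SimpleGraph V) (s : Set V) (t : ℝ) : Prop :=
  ∀ c : (G.induce s).ConnectedComponent, (Nat.card c.supp : ℝ) ≤ t

def IsBranch [DecidableEq V] (G : SimpleGraph V) (S B : Finset V) (w : V) : Prop :=
  w ∈ B ∧ B ⊆ S ∧ ∀ x ∈ B.erase w, ∀ y ∈ S.erase w, G.Adj x y → y ∈ B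

theorem IsAcyclic.eq_of_adj_of_reachable_induce (hG : G.IsAcyclic) {s : Set V} {v : V}
    (hv : v ∉ s) {x y : s} (hxy : (G.induce s).Reachable x y) (hx : G.Adj v x)
    (hy : G.Adj v y) : x = y := by
  classical
  by_contra hne
  obtain ⟨p⟩ := hxy
  let q := (p.map (Embedding.induce s).toHom).toPath
  have hvq : v ∉ q.1.support := fun hv' => by
    have := (p.map (Embedding.induce s).toHom).support_toPath_subset_support hv'
    rw [Walk.support_map, List.mem_map] at this
    obtain ⟨z, -, hz⟩ := this
    exact hv (hz ▸ z.2)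
  refine hvq (hG.mem_support_of_ne_mem_support_of_adj_of_isPath q.2
    (Path.singleton hx.symm).2 hy.symm ?_)
  have hyv : (y : V) ≠ v := fun h => hv (h ▸ y.2)
  simp [Subtype.val_injective.ne (Ne.symm hne), hyv]

theorem reachable_induce_of_closed {a s : Set V} (ha : ∀ x ∈ a, ∀ y ∈ s, G.Adj x y → y ∈ a)
    {x y : s} (hx : (x : V) ∈ a) (h : (G.induce s).Reachable x y) :
    ∃ hy : (y : V) ∈ a, (G.induce a).Reachable ⟨x, hx⟩ ⟨y, hy⟩ := by
  obtain ⟨p⟩ := h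
  induction p with
  | nil => exact ⟨hx, .rfl⟩
  | cons hxz _ ih =>
    obtain ⟨hy, hzy⟩ := ih (ha _ hx _ (Subtype.prop _) hxz)
    exact ⟨hy, (Adj.reachable (by simpa using hxz)).trans hzy⟩

section Finite

variable [Finite V]

theorem ComponentsBoundedBy.card_supp_connectedComponentMk_le {a s : Set V} {t : ℝ}
    (hb : G.ComponentsBoundedBy a t) (ha : ∀ x ∈ a, ∀ y ∈ s, G.Adj x y → y ∈ a)
    {x : s} (hx : (x : V) ∈ a) :
    (Nat.card ((G.induce s).connectedComponentMk x).supp : ℝ) ≤ t := by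
  have hmem (z : ((G.induce s).connectedComponentMk x).supp) :
      ∃ hz : (z : V) ∈ a, (G.induce a).Reachable ⟨x, hx⟩ ⟨z, hz⟩ :=
    reachable_induce_of_closed ha hx (ConnectedComponent.eq.1 z.2).symm
  let f (z : ((G.induce s).connectedComponentMk x).supp) :
      ((G.induce a).connectedComponentMk ⟨x, hx⟩).supp :=
    ⟨⟨z, (hmem z).1⟩, ConnectedComponent.eq.2 (hmem z).2.symm⟩
  have hf : Function.Injective f := fun z z' h => by
    simpa [f, Subtype.ext_iff] using h
  exact (Nat.cast_le.2 (Nat.card_le_card_of_injective f hf)).trans (hb _)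

theorem ComponentsBoundedBy.union {a b : Set V} {t : ℝ} (ha : G.ComponentsBoundedBy a t)
    (hb : G.ComponentsBoundedBy b t) (hab : ∀ x ∈ a, ∀ y ∈ b, ¬G.Adj x y) :
    G.ComponentsBoundedBy (a ∪ b) t := by
  intro c
  obtain ⟨x, rfl⟩ := c.exists_rep
  rcases x.2 with hx | hx
  · exact ha.card_supp_connectedComponentMk_le
      (fun y hy z hz hyz => hz.resolve_right (hab y hy z · hyz)) hx
  · exact hb.card_supp_connectedComponentMk_le
      (fun y hy z hz hyz => hz.resolve_left (hab z · y hy hyz.symm)) hx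

theorem card_supp_le_card (S : Finset V) (c : (G.induce (S : Set V)).ConnectedComponent) :
    Nat.card c.supp ≤ S.card :=
  (Finite.card_subtype_le _).trans_eq (Nat.card_eq_finsetCard S)

end Finite

section Fintype

variable [Fintype V]

theorem IsAcyclic.exists_finset_of_connectedComponent (hG : G.IsAcyclic) {s : Set V} {v : V}
    (hv : v ∉ s) (c : (G.induce s).ConnectedComponent) :
    ∃ D : Finset V, ∃ w ∈ D, ↑D ⊆ s ∧ Nat.card c.supp ≤ D.card ∧
      (∀ x ∈ D, ∀ y ∈ s, G.Adj x y → y ∈ D) ∧ ∀ x ∈ D, G.Adj v x → x = w := by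
  classical
  let D : Finset V := {x | ∃ hx : x ∈ s, (G.induce s).connectedComponentMk ⟨x, hx⟩ = c}
  have hD (x : s) : (x : V) ∈ D ↔ x ∈ c.supp := by simp [D]
  obtain ⟨x₀, hx₀⟩ := c.exists_rep
  have hsupp (x : s) (hx : (x : V) ∈ D) : (G.induce s).Reachable x₀ x := by
    rw [hD] at hx
    exact ConnectedComponent.eq.1 (hx₀.trans hx.symm)
  have hDs : ↑D ⊆ s := fun x hx => by simp only [D, coe_filter] at hx; exact hx.2.1
  obtain ⟨w, hwD, hw⟩ : ∃ w ∈ D, ∀ x ∈ D, G.Adj v x → x = w := by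
    by_cases h : ∃ w ∈ D, G.Adj v w
    · obtain ⟨w, hwD, hvw⟩ := h
      refine ⟨w, hwD, fun x hxD hvx => ?_⟩
      have := hG.eq_of_adj_of_reachable_induce (x := ⟨x, hDs hxD⟩) (y := ⟨w, hDs hwD⟩) hv
        ((hsupp _ hxD).symm.trans (hsupp _ hwD)) hvx hvw
      exact congrArg Subtype.val this
    · push Not at h
      exact ⟨x₀, (hD x₀).2 hx₀, fun x hxD hvx => absurd hvx (h x hxD)⟩
  refine ⟨D, w, hwD, hDs, ?_, fun x hxD y hy hxy => ?_, hw⟩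
  · refine (Nat.card_le_card_of_injective (β := D) (fun z => ⟨z.1, (hD z.1).2 z.2⟩)
      fun z z' h => ?_).trans_eq (Nat.card_eq_finsetCard D)
    simpa [Subtype.ext_iff] using h
  · rw [hD ⟨x, hDs hxD⟩] at hxD
    rw [hD ⟨y, hy⟩, ConnectedComponent.mem_supp_iff, ← hxD]
    exact ConnectedComponent.connectedComponentMk_eq_of_adj (by simpa using hxy.symm)

variable [DecidableEq V]

theorem IsAcyclic.exists_branch (hG : G.IsAcyclic) {t : ℝ} {S A : Finset V}
    {v : V} (hA : G.IsBranch S A v) (hAt : t < A.card) :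
    ∃ B w, G.IsBranch S B w ∧ t < B.card ∧ G.ComponentsBoundedBy ↑(B.erase w) t := by
  induction A using strongInduction generalizing v with
  | H A ih =>
  by_cases hb : G.ComponentsBoundedBy ↑(A.erase v) t
  · exact ⟨A, v, hA, hAt, hb⟩
  simp only [ComponentsBoundedBy, not_forall, not_le] at hb
  obtain ⟨c, hc⟩ := hb
  obtain ⟨hvA, hAS, hA⟩ := hA
  obtain ⟨D, w, hwD, hDA, hcD, hD, hw⟩ :=
    hG.exists_finset_of_connectedComponent (notMem_erase v A) c
  rw [coe_subset] at hDA
  refine ih D (hDA.trans_ssubset (erase_ssubset hvA))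
    ⟨hwD, hDA.trans ((A.erase_subset v).trans hAS), fun x hx y hy hxy => ?_⟩
    (hc.trans_le (by exact_mod_cast hcD))
  have hxD := mem_of_mem_erase hx
  have hyv : y ≠ v := by
    rintro rfl
    exact ne_of_mem_erase hx (hw x hxD hxy.symm)
  have hyA := hA x (hDA hxD) y (mem_erase.2 ⟨hyv, mem_of_mem_erase hy⟩) hxy
  exact hD x hxD y (by simpa [hyv] using hyA) hxy

theorem IsAcyclic.exists_separator (hG : G.IsAcyclic) (t : ℝ) (S : Finset V) :
    ∃ M ⊆ S, (M = ∅ ∨ M.card * t < S.card) ∧ G.ComponentsBoundedBy ↑(S \ M) t := by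
  induction S using strongInduction with
  | H S ih =>
  by_cases hb : G.ComponentsBoundedBy ↑S t
  · exact ⟨∅, empty_subset S, Or.inl rfl, by simpa using hb⟩
  simp only [ComponentsBoundedBy, not_forall, not_le] at hb
  obtain ⟨c, hc⟩ := hb
  obtain ⟨⟨v, hv⟩, -⟩ := c.exists_rep
  obtain ⟨A, w, ⟨hwA, hAS, hA⟩, hAt, hAb⟩ :=
    hG.exists_branch ⟨hv, subset_rfl, fun _ _ y hy _ => mem_of_mem_erase hy⟩
      (hc.trans_le (by exact_mod_cast card_supp_le_card S c))
  obtain ⟨M, hM, hMcard, hMb⟩ := ih (S \ A) (sdiff_ssubset hAS ⟨w, hwA⟩)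
  have hwM : w ∉ M := fun h => (mem_sdiff.1 (hM h)).2 hwA
  refine ⟨insert w M, insert_subset (hAS hwA) (hM.trans sdiff_subset),
    Or.inr ?_, ?_⟩
  · have hS : (S.card : ℝ) = (S \ A).card + A.card := by
      exact_mod_cast (card_sdiff_add_card_eq_card hAS).symm
    rw [card_insert_of_notMem hwM, hS]
    push_cast
    rcases hMcard with rfl | hMcard
    · simpa using hAt.trans_le (le_add_of_nonneg_left (Nat.cast_nonneg _))
    · linarith
  · have hsplit : S \ insert w M = A.erase w ∪ ((S \ A) \ M) := by grind
    rw [hsplit, coe_union]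
    refine hAb.union hMb fun x hx y hy hxy => ?_
    simp only [coe_sdiff, Set.mem_sdiff, mem_coe] at hy
    have hyw : y ≠ w := fun h => hy.1.2 (h ▸ hwA)
    exact hy.1.2 (hA x hx y (mem_erase.2 ⟨hyw, hy.1.1⟩) hxy)

end Fintype

end SimpleGraph

theorem tree_partition_general {V : Type} [Fintype V] (G : SimpleGraph V)
    (hT : G.IsTree) (n k : ℕ) (hn : n = Fintype.card V)
    (hk2 : 2 ≤ k) :
    ∃ M : Finset V, M.card ≤ 3 * k - 5 ∧
      ∀ c : (G.induce ((↑M : Set V)ᶜ)).ConnectedComponent,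
        (Nat.card c.supp : ℝ) ≤ (n : ℝ) / (k : ℝ) := by
  classical
  obtain ⟨M, -, hcard, hb⟩ := hT.isAcyclic.exists_separator ((n : ℝ) / k) Finset.univ
  have hMc : (↑(Finset.univ \ M) : Set V) = (↑M)ᶜ := by
    rw [Finset.coe_sdiff, Finset.coe_univ, Set.compl_eq_univ_sdiff]
  refine ⟨M, ?_, hMc ▸ hb⟩
  rcases hcard with rfl | hcard
  · simp
  have hk : (0 : ℝ) < k := by positivity
  rw [Finset.card_univ, ← hn, mul_div_assoc', div_lt_iff₀ hk, mul_comm (n : ℝ)] at hcard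
  have : M.card < k := by exact_mod_cast lt_of_mul_lt_mul_right hcard (Nat.cast_nonneg n)
  omega

/-- **Tree partition lemma.**  For any rooted tree `T` on `n` vertices and any
integer `2 ≤ k ≤ n`, there exists a set `M` of at most `3k − 5` vertices such that
every connected component of `T` minus `M` has at most `n/k` vertices. -/
theorem tree_partition {V : Type} [Fintype V] (G : SimpleGraph V) (root : V)
    (hT : G.IsTree) (n k : ℕ) (hn : n = Fintype.card V)
    (hk2 : 2 ≤ k) (hkn : k ≤ n) :
    ∃ M : Finset V, M.card ≤ 3 * k - 5 ∧
      ∀ c : (G.induce ((↑M : Set V)ᶜ)).ConnectedComponent,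
        (Nat.card c.supp : ℝ) ≤ (n : ℝ) / (k : ℝ) :=
  tree_partition_general G hT n k hn hk2
end

section
/- Triple path lemma: let s, t be vertices, [u, v] an interval of vertices on the (unique) shortest path from s to t with u before (or equal to) v, f a vertex on [u, v] with f ≠ s, t, and F any admissible value, i.e., a real number satisfying d(s,t ∣ avoid [u,v]) ≥ F ≥ d(s,t ∣ avoid f). Then d(s,t ∣ avoid f) = min{ d(s,u) + d(u,t ∣ avoid f), d(s,v ∣ avoid f) + d(v,t), F }. -/
open scoped ENNReal

/-- Cost of a walk, given as a list of vertices, in a weighted digraph: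
the sum of the weights of consecutive pairs.  Non-edges have weight `⊤`. -/
noncomputable def walkCost {V : Type*} (w : V → V → ℝ≥0∞) : List V → ℝ≥0∞
  | [] => 0
  | [_] => 0
  | a :: b :: l => w a b + walkCost w (b :: l)

/-- `p` is a walk from `s` to `t`. -/
def IsWalkFromTo {V : Type*} (s t : V) (p : List V) : Prop :=
  p.head? = some s ∧ p.getLast? = some t

/-- `d(s,t ∣ avoid A)`: the length of the shortest walk from `s` to `t`
avoiding every vertex of `A` (`⊤` if none exists). -/
noncomputable def dAvoid {V : Type*} (w : V → V → ℝ≥0∞) (s t : V) (A : Set V) : ℝ≥0∞ :=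
  ⨅ p ∈ {p : List V | IsWalkFromTo s t p ∧ ∀ x ∈ p, x ∉ A}, walkCost w p

/-- All-pairs unique shortest paths. -/
def UniqueSP {V : Type*} (w : V → V → ℝ≥0∞) : Prop :=
  ∀ a b : V, dAvoid w a b ∅ ≠ ⊤ →
    ∃! p : List V, IsWalkFromTo a b p ∧ walkCost w p = dAvoid w a b ∅

/-- The set of vertices of the path `P` with positions in `[iu, iv]`:
the interval `[u, v]` on `P`. -/
def intervalSet {V : Type*} (P : List V) (iu iv : ℕ) : Set V :=
  {x | ∃ i : ℕ, iu ≤ i ∧ i ≤ iv ∧ P[i]? = some x}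

/-!
Let `P` be the shortest `s`–`t` path. Unique shortest paths make `P` simple, so its prefix up to
`u` and its suffix from `v` avoid `f`; splicing them with detours gives the first two upper bounds,
and `F` is an upper bound by admissibility. Conversely, a walk `q` avoiding `f` either misses
`[u, v]`, and then costs at least `d(s,t ∣ avoid [u,v]) ≥ F`, or meets it in some `x ≠ f`. If `x`
comes before `f`, the piece of `P` from `u` to `x` is a shortest path avoiding `f`, so
`d(s,u) + d(u,t ∣ f) ≤ d(s,u) + d(u,x) + d(x,t ∣ f) = d(s,x) + d(x,t ∣ f) ≤ cost q`;
symmetrically if `x` comes after `f`.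
-/

theorem List.Nodup.notMem_take {α : Type*} {l : List α} {a : α} {k n : ℕ} (hl : l.Nodup)
    (hk : l[k]? = some a) (hn : n ≤ k) : a ∉ l.take n := fun ha =>
  have hd : a ∈ l.drop n :=
    List.mem_of_getElem? (i := k - n) (by rw [List.getElem?_drop, Nat.add_sub_cancel' hn, hk])
  (List.nodup_append.1 ((l.take_append_drop n).symm ▸ hl)).2.2 a ha a hd rfl

theorem List.Nodup.notMem_drop {α : Type*} {l : List α} {a : α} {k n : ℕ} (hl : l.Nodup)
    (hk : l[k]? = some a) (hn : k < n) : a ∉ l.drop n := fun hd =>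
  have ha : a ∈ l.take n :=
    List.mem_of_getElem? (i := k) (by rw [List.getElem?_take, if_pos hn, hk])
  (List.nodup_append.1 ((l.take_append_drop n).symm ▸ hl)).2.2 a ha a hd rfl

section

variable {V : Type*} {w : V → V → ℝ≥0∞}

namespace IsWalkFromTo

variable {a b x : V} {p q : List V} {i : ℕ}

theorem append_tail (hp : IsWalkFromTo a x p) (hq : IsWalkFromTo x b q) :
    IsWalkFromTo a b (p ++ q.tail) := by
  obtain ⟨p', rfl⟩ := List.getLast?_eq_some_iff.1 hp.2
  cases q with
  | nil => simp [IsWalkFromTo] at hq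
  | cons y q =>
    obtain ⟨hy, hq⟩ := hq
    obtain rfl : y = x := by simpa using hy
    refine ⟨by simpa [List.head?_append] using hp.1, ?_⟩
    simpa [List.getLast?_append] using hq

theorem take (hp : IsWalkFromTo a b p) (hx : p[i]? = some x) :
    IsWalkFromTo a x (p.take (i + 1)) :=
  ⟨by simp [List.head?_take, hp.1], by simp [List.getLast?_take, hx]⟩

theorem drop (hp : IsWalkFromTo a b p) (hx : p[i]? = some x) : IsWalkFromTo x b (p.drop i) :=
  ⟨by rw [List.head?_drop, hx], by
    rw [List.getLast?_drop, if_neg (by simpa using (List.getElem?_eq_some_iff.1 hx).1), hp.2]⟩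

end IsWalkFromTo

section walkCost

variable {x : V} {p q : List V}

theorem walkCost_append_cons (p : List V) (x : V) (q : List V) :
    walkCost w (p ++ x :: q) = walkCost w (p ++ [x]) + walkCost w (x :: q) := by
  induction p with
  | nil => simp [walkCost]
  | cons a p ih =>
    cases p with
    | nil => simp [walkCost]
    | cons b p =>
      simp only [List.cons_append, walkCost] at ih ⊢
      rw [ih, add_assoc]

theorem walkCost_append_tail (hp : p.getLast? = some x) (hq : q.head? = some x) :
    walkCost w (p ++ q.tail) = walkCost w p + walkCost w q := by
  obtain ⟨p', rfl⟩ := List.getLast?_eq_some_iff.1 hp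
  cases q with
  | nil => simp at hq
  | cons y q =>
    obtain rfl : y = x := by simpa using hq
    simpa using walkCost_append_cons p' y q

theorem walkCost_take_add_walkCost_drop {i : ℕ} (hx : p[i]? = some x) :
    walkCost w (p.take (i + 1)) + walkCost w (p.drop i) = walkCost w p := by
  rw [← walkCost_append_tail (x := x) (by simp [List.getLast?_take, hx])
    (by rw [List.head?_drop, hx]), List.tail_drop, List.take_append_drop]

end walkCost

section dAvoid

variable {s t x : V} {A B C : Set V} {p : List V}

theorem dAvoid_le_walkCost (hp : IsWalkFromTo s t p) (hA : ∀ y ∈ p, y ∉ A) :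
    dAvoid w s t A ≤ walkCost w p :=
  iInf₂_le p ⟨hp, hA⟩

theorem le_dAvoid {c : ℝ≥0∞}
    (h : ∀ p, IsWalkFromTo s t p → (∀ y ∈ p, y ∉ A) → c ≤ walkCost w p) :
    c ≤ dAvoid w s t A :=
  le_iInf₂ fun p hp => h p hp.1 hp.2

theorem dAvoid_mono (h : A ⊆ B) : dAvoid w s t A ≤ dAvoid w s t B :=
  le_dAvoid fun _ hp hB => dAvoid_le_walkCost hp fun y hy hyA => hB y hy (h hyA)

theorem dAvoid_eq_top_of_left_mem (hs : s ∈ A) : dAvoid w s t A = ⊤ :=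
  top_unique <| le_dAvoid fun _ hp hA => absurd hs (hA s (List.mem_of_mem_head? hp.1))

theorem dAvoid_eq_top_of_right_mem (ht : t ∈ A) : dAvoid w s t A = ⊤ :=
  top_unique <| le_dAvoid fun _ hp hA => absurd ht (hA t (List.mem_of_mem_getLast? hp.2))

theorem dAvoid_le_add (hB : A ⊆ B) (hC : A ⊆ C) :
    dAvoid w s t A ≤ dAvoid w s x B + dAvoid w x t C := by
  simp only [dAvoid, ENNReal.iInf_add, ENNReal.add_iInf]
  refine le_iInf₂ fun q hq => le_iInf₂ fun p hp => ?_
  rw [← walkCost_append_tail hp.1.2 hq.1.1]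
  refine dAvoid_le_walkCost (hp.1.append_tail hq.1) fun y hy hyA => ?_
  rcases List.mem_append.1 hy with hy | hy
  · exact hp.2 y hy (hB hyA)
  · exact hq.2 y (List.mem_of_mem_tail hy) (hC hyA)

theorem dAvoid_add_dAvoid_le_walkCost (hp : IsWalkFromTo s t p) (hA : ∀ y ∈ p, y ∉ A)
    (hx : x ∈ p) : dAvoid w s x A + dAvoid w x t A ≤ walkCost w p := by
  obtain ⟨i, hi⟩ := List.mem_iff_getElem?.1 hx
  rw [← walkCost_take_add_walkCost_drop hi]
  exact add_le_add (dAvoid_le_walkCost (hp.take hi) fun y hy => hA y (List.mem_of_mem_take hy))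
    (dAvoid_le_walkCost (hp.drop hi) fun y hy => hA y (List.mem_of_mem_drop hy))

end dAvoid

def IsShortestWalk (w : V → V → ℝ≥0∞) (s t : V) (p : List V) : Prop :=
  IsWalkFromTo s t p ∧ walkCost w p = dAvoid w s t ∅

namespace IsShortestWalk

variable {s t x : V} {p : List V} {i : ℕ}

theorem dAvoid_add_dAvoid (hp : IsShortestWalk w s t p) (hx : x ∈ p) :
    dAvoid w s x ∅ + dAvoid w x t ∅ = dAvoid w s t ∅ :=
  le_antisymm (hp.2 ▸ dAvoid_add_dAvoid_le_walkCost hp.1 (by simp) hx)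
    (dAvoid_le_add subset_rfl subset_rfl)

theorem dAvoid_singleton_eq (hp : IsShortestWalk w s t p) {f : V} (hf : f ∉ p) :
    dAvoid w s t {f} = dAvoid w s t ∅ :=
  le_antisymm (hp.2 ▸ dAvoid_le_walkCost hp.1 fun _ hy hyf => hf (hyf ▸ hy))
    (dAvoid_mono (Set.empty_subset _))

theorem take (hp : IsShortestWalk w s t p) (hfin : dAvoid w s t ∅ ≠ ⊤) (hx : p[i]? = some x) :
    IsShortestWalk w s x (p.take (i + 1)) := by
  have hsplit := walkCost_take_add_walkCost_drop (w := w) hx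
  have hdrop : walkCost w (p.drop i) ≠ ⊤ :=
    ne_top_of_le_ne_top (hp.2 ▸ hfin) (hsplit ▸ le_add_self)
  refine ⟨hp.1.take hx, le_antisymm ?_ (dAvoid_le_walkCost (hp.1.take hx) (by simp))⟩
  rw [← ENNReal.add_le_add_iff_right hdrop, hsplit, hp.2,
    ← hp.dAvoid_add_dAvoid (List.mem_of_getElem? hx)]
  exact add_le_add_right (dAvoid_le_walkCost (hp.1.drop hx) (by simp)) _

theorem drop (hp : IsShortestWalk w s t p) (hfin : dAvoid w s t ∅ ≠ ⊤) (hx : p[i]? = some x) :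
    IsShortestWalk w x t (p.drop i) := by
  have hsplit := walkCost_take_add_walkCost_drop (w := w) hx
  have htake : walkCost w (p.take (i + 1)) ≠ ⊤ :=
    ne_top_of_le_ne_top (hp.2 ▸ hfin) (hsplit ▸ le_self_add)
  refine ⟨hp.1.drop hx, le_antisymm ?_ (dAvoid_le_walkCost (hp.1.drop hx) (by simp))⟩
  rw [← ENNReal.add_le_add_iff_left htake, hsplit, hp.2,
    ← hp.dAvoid_add_dAvoid (List.mem_of_getElem? hx)]
  exact add_le_add_left (dAvoid_le_walkCost (hp.1.take hx) (by simp)) _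

theorem nodup (hp : IsShortestWalk w s t p) (hfin : dAvoid w s t ∅ ≠ ⊤) (husp : UniqueSP w) :
    p.Nodup := by
  refine List.nodup_iff_getElem?_ne_getElem?.2 fun i j hij hj hdup => ?_
  obtain ⟨x, hxj⟩ : ∃ x, p[j]? = some x := ⟨p[j], List.getElem?_eq_getElem hj⟩
  have hxi : p[i]? = some x := hdup ▸ hxj
  -- cutting out the cycle between positions `i` and `j` leaves a second shortest walk
  have hshort : IsShortestWalk w s t (p.take (i + 1) ++ (p.drop j).tail) := by
    refine ⟨(hp.1.take hxi).append_tail (hp.1.drop hxj), ?_⟩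
    rw [walkCost_append_tail (hp.1.take hxi).2 (hp.1.drop hxj).1, (hp.take hfin hxi).2,
      (hp.drop hfin hxj).2, hp.dAvoid_add_dAvoid (List.mem_of_getElem? hxi)]
  have hlen := congrArg List.length ((husp s t hfin).unique hshort hp)
  simp only [List.length_append, List.length_take, List.length_tail, List.length_drop] at hlen
  omega

section detour

variable {u v f : V} {q : List V} {iu iv ifi : ℕ}

theorem dAvoid_singleton_le_add_of_before (hp : IsShortestWalk w s t p)
    (hfin : dAvoid w s t ∅ ≠ ⊤) (hnd : p.Nodup) (hu : p[iu]? = some u) (hf : p[ifi]? = some f)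
    (huf : iu ≤ ifi) :
    dAvoid w s t {f} ≤ dAvoid w s u ∅ + dAvoid w u t {f} := by
  rcases huf.lt_or_eq with hlt | rfl
  · calc dAvoid w s t {f} ≤ dAvoid w s u {f} + dAvoid w u t {f} :=
          dAvoid_le_add subset_rfl subset_rfl
      _ = dAvoid w s u ∅ + dAvoid w u t {f} := by
          rw [(hp.take hfin hu).dAvoid_singleton_eq (hnd.notMem_take hf hlt)]
  · rw [Option.some_inj.1 (hu.symm.trans hf), dAvoid_eq_top_of_left_mem (Set.mem_singleton f),
      add_top]
    exact le_top

theorem dAvoid_singleton_le_add_of_after (hp : IsShortestWalk w s t p)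
    (hfin : dAvoid w s t ∅ ≠ ⊤) (hnd : p.Nodup) (hv : p[iv]? = some v) (hf : p[ifi]? = some f)
    (hfv : ifi ≤ iv) :
    dAvoid w s t {f} ≤ dAvoid w s v {f} + dAvoid w v t ∅ := by
  rcases hfv.lt_or_eq with hlt | rfl
  · calc dAvoid w s t {f} ≤ dAvoid w s v {f} + dAvoid w v t {f} :=
          dAvoid_le_add subset_rfl subset_rfl
      _ = dAvoid w s v {f} + dAvoid w v t ∅ := by
          rw [(hp.drop hfin hv).dAvoid_singleton_eq (hnd.notMem_drop hf hlt)]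
  · rw [Option.some_inj.1 (hv.symm.trans hf), dAvoid_eq_top_of_right_mem (Set.mem_singleton f),
      top_add]
    exact le_top

theorem le_walkCost_of_mem_before (hp : IsShortestWalk w s t p) (hfin : dAvoid w s t ∅ ≠ ⊤)
    (hnd : p.Nodup) (hu : p[iu]? = some u) (hf : p[ifi]? = some f) (hx : p[i]? = some x)
    (hui : iu ≤ i) (hif : i < ifi) (hq : IsWalkFromTo s t q)
    (hqf : ∀ y ∈ q, y ∉ ({f} : Set V)) (hxq : x ∈ q) :
    dAvoid w s u ∅ + dAvoid w u t {f} ≤ walkCost w q := by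
  have hsx := hp.take hfin hx
  have hux : (p.take (i + 1))[iu]? = some u := by rw [List.getElem?_take, if_pos (by omega), hu]
  have hsx_fin : dAvoid w s x ∅ ≠ ⊤ :=
    ne_top_of_le_ne_top hfin (hp.dAvoid_add_dAvoid (List.mem_of_getElem? hx) ▸ le_self_add)
  have hux_avoid : dAvoid w u x {f} = dAvoid w u x ∅ :=
    (hsx.drop hsx_fin hux).dAvoid_singleton_eq fun hf' =>
      hnd.notMem_take hf (Nat.add_one_le_of_lt hif) (List.mem_of_mem_drop hf')
  calc dAvoid w s u ∅ + dAvoid w u t {f}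
      ≤ dAvoid w s u ∅ + (dAvoid w u x {f} + dAvoid w x t {f}) := by
        gcongr; exact dAvoid_le_add subset_rfl subset_rfl
    _ = dAvoid w s x ∅ + dAvoid w x t {f} := by
        rw [hux_avoid, ← add_assoc, hsx.dAvoid_add_dAvoid (List.mem_of_getElem? hux)]
    _ ≤ dAvoid w s x {f} + dAvoid w x t {f} := by
        gcongr; exact dAvoid_mono (Set.empty_subset _)
    _ ≤ walkCost w q := dAvoid_add_dAvoid_le_walkCost hq hqf hxq

theorem le_walkCost_of_mem_after (hp : IsShortestWalk w s t p) (hfin : dAvoid w s t ∅ ≠ ⊤)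
    (hnd : p.Nodup) (hv : p[iv]? = some v) (hf : p[ifi]? = some f) (hx : p[i]? = some x)
    (hiv : i ≤ iv) (hfi : ifi < i) (hq : IsWalkFromTo s t q)
    (hqf : ∀ y ∈ q, y ∉ ({f} : Set V)) (hxq : x ∈ q) :
    dAvoid w s v {f} + dAvoid w v t ∅ ≤ walkCost w q := by
  have hxt := hp.drop hfin hx
  have hxv : (p.drop i)[iv - i]? = some v := by
    rw [List.getElem?_drop, Nat.add_sub_cancel' hiv, hv]
  have hxt_fin : dAvoid w x t ∅ ≠ ⊤ :=
    ne_top_of_le_ne_top hfin (hp.dAvoid_add_dAvoid (List.mem_of_getElem? hx) ▸ le_add_self)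
  have hxv_avoid : dAvoid w x v {f} = dAvoid w x v ∅ :=
    (hxt.take hxt_fin hxv).dAvoid_singleton_eq fun hf' =>
      hnd.notMem_drop hf hfi (List.mem_of_mem_take hf')
  calc dAvoid w s v {f} + dAvoid w v t ∅
      ≤ dAvoid w s x {f} + dAvoid w x v {f} + dAvoid w v t ∅ := by
        gcongr; exact dAvoid_le_add subset_rfl subset_rfl
    _ = dAvoid w s x {f} + dAvoid w x t ∅ := by
        rw [hxv_avoid, add_assoc, hxt.dAvoid_add_dAvoid (List.mem_of_getElem? hxv)]
    _ ≤ dAvoid w s x {f} + dAvoid w x t {f} := by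
        gcongr; exact dAvoid_mono (Set.empty_subset _)
    _ ≤ walkCost w q := dAvoid_add_dAvoid_le_walkCost hq hqf hxq

end detour

end IsShortestWalk

end

theorem triple_path_lemma_general {V : Type*} (w : V → V → ℝ≥0∞)
    (husp : UniqueSP w)
    (s t u v f : V) (P : List V)
    (hP : IsWalkFromTo s t P) (hPcost : walkCost w P = dAvoid w s t ∅)
    (iu iv ifi : ℕ)
    (hu : P[iu]? = some u) (hv : P[iv]? = some v) (hf : P[ifi]? = some f)
    (huf : iu ≤ ifi) (hfv : ifi ≤ iv)
    (F : ℝ≥0∞)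
    (hF1 : dAvoid w s t (intervalSet P iu iv) ≥ F)
    (hF2 : F ≥ dAvoid w s t {f}) :
    dAvoid w s t {f} =
      min (min (dAvoid w s u ∅ + dAvoid w u t {f})
               (dAvoid w s v {f} + dAvoid w v t ∅)) F := by
  rcases eq_or_ne (dAvoid w s t ∅) ⊤ with hinf | hfin
  -- without a finite `s`–`t` walk every term of the minimum is `⊤`
  · have hmin : dAvoid w s t ∅ ≤ min (min (dAvoid w s u ∅ + dAvoid w u t {f})
        (dAvoid w s v {f} + dAvoid w v t ∅)) F :=
      le_min (le_min (dAvoid_le_add subset_rfl (Set.empty_subset _))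
        (dAvoid_le_add (Set.empty_subset _) subset_rfl))
        ((dAvoid_mono (Set.empty_subset _)).trans hF2)
    rw [hinf, top_le_iff] at hmin
    rw [hmin, ← top_le_iff, ← hinf]
    exact dAvoid_mono (Set.empty_subset _)
  have hp : IsShortestWalk w s t P := ⟨hP, hPcost⟩
  have hnd := hp.nodup hfin husp
  refine le_antisymm (le_min (le_min (hp.dAvoid_singleton_le_add_of_before hfin hnd hu hf huf)
    (hp.dAvoid_singleton_le_add_of_after hfin hnd hv hf hfv)) hF2) (le_dAvoid fun q hq hqf => ?_)
  by_cases hmeet : ∃ x ∈ q, x ∈ intervalSet P iu iv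
  · obtain ⟨x, hxq, i, hui, hiv, hxi⟩ := hmeet
    rcases lt_trichotomy i ifi with hif | rfl | hfi
    · exact (min_le_left _ _).trans <| (min_le_left _ _).trans <|
        hp.le_walkCost_of_mem_before hfin hnd hu hf hxi hui hif hq hqf hxq
    · exact (hqf x hxq (Option.some_inj.1 (hxi.symm.trans hf))).elim
    · exact (min_le_left _ _).trans <| (min_le_right _ _).trans <|
        hp.le_walkCost_of_mem_after hfin hnd hv hf hxi hiv hfi hq hqf hxq
  · exact (min_le_right _ _).trans <|
      hF1.trans (dAvoid_le_walkCost hq fun x hx hxI => hmeet ⟨x, hx, hxI⟩)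

/-- **Triple path lemma.**  If `[u, v]` is an interval on the unique shortest path
from `s` to `t`, `f ∈ [u, v]` with `f ≠ s, t`, and `F` is any admissible value,
i.e. `d(s,t ∣ avoid [u,v]) ≥ F ≥ d(s,t ∣ avoid f)`, then
`d(s,t ∣ avoid f) = min { d(s,u) + d(u,t ∣ avoid f), d(s,v ∣ avoid f) + d(v,t), F }`. -/
theorem triple_path_lemma {V : Type*} (w : V → V → ℝ≥0∞)
    (husp : UniqueSP w)
    (s t u v f : V) (P : List V)
    (hP : IsWalkFromTo s t P) (hPcost : walkCost w P = dAvoid w s t ∅)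
    (iu iv ifi : ℕ)
    (hu : P[iu]? = some u) (hv : P[iv]? = some v) (hf : P[ifi]? = some f)
    (huf : iu ≤ ifi) (hfv : ifi ≤ iv)
    (hfs : f ≠ s) (hft : f ≠ t)
    (F : ℝ≥0∞)
    (hF1 : dAvoid w s t (intervalSet P iu iv) ≥ F)
    (hF2 : F ≥ dAvoid w s t {f}) :
    dAvoid w s t {f} =
      min (min (dAvoid w s u ∅ + dAvoid w u t {f})
               (dAvoid w s v {f} + dAvoid w v t ∅)) F :=
  triple_path_lemma_general w husp s t u v f P hP hPcost iu iv ifi hu hv hf huf hfv F hF1 hF2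
end

section
/- Inductive step of the tree partition lemma: if every rooted tree on n vertices admits, for parameter ⌈k/2⌉ (with 2 ≤ ⌈k/2⌉ < k, k ≥ 3), a marked set of size at most 3⌈k/2⌉ − 5 splitting the tree into components of size at most n/⌈k/2⌉, and every tree on m vertices admits one vertex whose removal leaves components of size ≤ m/2, then every rooted tree on n vertices admits a marked set of size at most 3k − 5 splitting it into components of size at most n/k; the count uses that at most 2⌈k/2⌉ − 1 components can exceed n/(2⌈k/2⌉) vertices, and that (2⌈k/2⌉ − 1) + (3⌈k/2⌉ − 5) ≤ 3k − 5 for all k ≥ 3. -/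
open SimpleGraph

private lemma walk_mk_eq {α : Type*} {H : SimpleGraph α} {a b : α} (p : H.Walk a b) :
    ∀ y ∈ p.support, H.connectedComponentMk y = H.connectedComponentMk a := by
  classical
  intro y hy
  exact ConnectedComponent.sound ((p.takeUntil y hy).reachable).symm

private lemma reach_transfer {V : Type*} {G : SimpleGraph V} {A T : Set V} :
    ∀ {a b : ↥A} (p : (G.induce A).Walk a b),
      (∀ y ∈ p.support, (y : V) ∈ T) →
      ∀ (ha : (a : V) ∈ T) (hb : (b : V) ∈ T),
        (G.induce T).Reachable ⟨a, ha⟩ ⟨b, hb⟩ := by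
  intro a b p
  induction p with
  | nil => intro _ ha hb; exact Reachable.refl _
  | @cons u x w h q ih =>
    intro hsupp ha hb
    have hx : (x : V) ∈ T := hsupp _ (by simp)
    have hadj : (G.induce T).Adj ⟨u, ha⟩ ⟨x, hx⟩ := h
    exact hadj.reachable.trans (ih (fun y hy => hsupp y (by simp [hy])) hx hb)

private lemma supp_connected {V : Type*} {G : SimpleGraph V} {A : Set V}
    (c : (G.induce A).ConnectedComponent) :
    (G.induce (Subtype.val '' c.supp)).Connected := by
  obtain ⟨v, hv⟩ := c.exists_rep
  haveI : Nonempty ↥(Subtype.val '' c.supp) := ⟨⟨↑v, v, hv, rfl⟩⟩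
  constructor
  rintro ⟨x, x', hx', rfl⟩ ⟨y, y', hy', rfl⟩
  have hr : (G.induce A).Reachable x' y' :=
    ConnectedComponent.eq.mp ((ConnectedComponent.mem_supp_iff _ _).mp hx' |>.trans
      ((ConnectedComponent.mem_supp_iff _ _).mp hy').symm)
  obtain ⟨p⟩ := hr
  have hsupp : ∀ y ∈ p.support, (y : V) ∈ Subtype.val '' c.supp := by
    intro z hz
    refine ⟨z, ?_, rfl⟩
    rw [ConnectedComponent.mem_supp_iff, walk_mk_eq p z hz]
    exact hx'
  exact reach_transfer p hsupp _ _

private lemma induce_acyclic {V : Type*} {G : SimpleGraph V} {s : Set V}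
    (h : G.IsAcyclic) : (G.induce s).IsAcyclic := by
  intro v p hp
  exact h (p.map (SimpleGraph.Embedding.induce s (G := G)).toHom)
    (hp.map (SimpleGraph.Embedding.induce s (G := G)).injective)

private lemma comp_into {V : Type*} [Finite V] {G : SimpleGraph V} {B T : Set V}
    (d : (G.induce B).ConnectedComponent)
    (hT : ∀ x : ↥B, x ∈ d.supp → (x : V) ∈ T) :
    ∃ e : (G.induce T).ConnectedComponent,
      (∀ x : ↥B, ∀ hx : x ∈ d.supp, (⟨↑x, hT x hx⟩ : ↥T) ∈ e.supp) ∧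
      Nat.card d.supp ≤ Nat.card e.supp := by
  obtain ⟨x₀, hx₀⟩ := d.exists_rep
  have hx₀d : x₀ ∈ d.supp := hx₀
  set e := (G.induce T).connectedComponentMk ⟨↑x₀, hT x₀ hx₀d⟩ with he
  have key : ∀ x : ↥B, ∀ hx : x ∈ d.supp, (⟨↑x, hT x hx⟩ : ↥T) ∈ e.supp := by
    intro x hx
    have hr : (G.induce B).Reachable x x₀ := by
      have hx' : (G.induce B).connectedComponentMk x = d := hx
      exact ConnectedComponent.eq.mp (hx'.trans hx₀.symm)
    obtain ⟨p⟩ := hr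
    have hsupp : ∀ y ∈ p.support, (y : V) ∈ T := by
      intro z hz
      refine hT z ?_
      rw [ConnectedComponent.mem_supp_iff, walk_mk_eq p z hz]
      exact hx
    rw [ConnectedComponent.mem_supp_iff, he]
    exact ConnectedComponent.sound (reach_transfer p hsupp _ _)
  refine ⟨e, key, ?_⟩
  exact Nat.card_le_card_of_injective
    (fun x : d.supp => (⟨⟨↑↑x, hT x x.2⟩, key x x.2⟩ : e.supp))
    (by intro x y hxy
        have : ((x : ↥B) : V) = ((y : ↥B) : V) :=
          congrArg (fun z : e.supp => ((z : ↥T) : V)) hxy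
        apply Subtype.ext; apply Subtype.ext; exact this)

private lemma card_supp_le_map {α β : Type*} [Finite β] {H : SimpleGraph α} {H' : SimpleGraph β}
    (φ : H →g H') (hinj : Function.Injective φ) (d : H.ConnectedComponent) :
    Nat.card d.supp ≤ Nat.card (d.map φ).supp := by
  apply Nat.card_le_card_of_injective
    (fun x : d.supp => (⟨φ ↑x, by
      rw [ConnectedComponent.mem_supp_iff]
      conv_rhs => rw [← (ConnectedComponent.mem_supp_iff d ↑x).mp x.2]
      exact (ConnectedComponent.map_mk φ ↑x).symm⟩ : (d.map φ).supp))
  intro x y hxy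
  exact Subtype.ext (hinj (congrArg Subtype.val hxy))

open SimpleGraph

private lemma partA (m n : ℕ) (hm : 1 ≤ m) (V : Type) [Fintype V] (G : SimpleGraph V)
    (hcard : Fintype.card V ≤ n) :
    Nat.card {c : G.ConnectedComponent |
        (n : ℝ) / (2 * (m : ℝ)) < (Nat.card c.supp : ℝ)} < 2 * m := by
  classical
  by_contra hlt
  push_neg at hlt
  set S := {c : G.ConnectedComponent | (n : ℝ) / (2 * (m : ℝ)) < (Nat.card c.supp : ℝ)} with hS
  haveI : Fintype G.ConnectedComponent := Fintype.ofFinite _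
  haveI : Fintype ↥S := Fintype.ofFinite _
  have hScard : (2 * m : ℕ) ≤ S.toFinset.card := by
    rwa [Set.toFinset_card, ← Nat.card_eq_fintype_card]
  -- card of V = sum over components of card supp
  have hfiber : ∀ c : G.ConnectedComponent,
      Nat.card c.supp = (Finset.univ.filter fun v => G.connectedComponentMk v = c).card := by
    intro c
    rw [Nat.card_coe_set_eq, Set.ncard_eq_toFinset_card']
    congr 1
    ext v
    simp [ConnectedComponent.mem_supp_iff]
  have hsum : ∑ c : G.ConnectedComponent, Nat.card c.supp = Fintype.card V := by
    rw [← Finset.card_univ,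
      Finset.card_eq_sum_card_fiberwise (f := G.connectedComponentMk)
        (fun v _ => Finset.mem_univ _)]
    exact Finset.sum_congr rfl fun c _ => hfiber c
  have hsum2 : ∑ c ∈ S.toFinset, (Nat.card c.supp : ℝ) ≤ (n : ℝ) := by
    calc ∑ c ∈ S.toFinset, (Nat.card c.supp : ℝ)
        ≤ ∑ c : G.ConnectedComponent, (Nat.card c.supp : ℝ) := by
          apply Finset.sum_le_sum_of_subset_of_nonneg (Finset.subset_univ _)
          intros; positivity
      _ = (Fintype.card V : ℝ) := by exact_mod_cast congrArg Nat.cast hsum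
      _ ≤ (n : ℝ) := by exact_mod_cast hcard
  have hne : S.toFinset.Nonempty := by
    rw [← Finset.card_pos]; omega
  have hsum3 : ∑ c ∈ S.toFinset, ((n : ℝ) / (2 * (m : ℝ))) <
      ∑ c ∈ S.toFinset, (Nat.card c.supp : ℝ) := by
    apply Finset.sum_lt_sum_of_nonempty hne
    intro c hc
    exact (Set.mem_toFinset (s := S)).mp hc
  rw [Finset.sum_const, nsmul_eq_mul] at hsum3
  have hm0 : (0 : ℝ) < 2 * (m : ℝ) := by positivity
  have h4 : (n : ℝ) ≤ (S.toFinset.card : ℝ) * ((n : ℝ) / (2 * (m : ℝ))) := by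
    have h5 : (2 * m : ℝ) * ((n : ℝ) / (2 * (m : ℝ))) = (n : ℝ) := by
      field_simp
    calc (n : ℝ) = (2 * m : ℝ) * ((n : ℝ) / (2 * (m : ℝ))) := h5.symm
      _ ≤ (S.toFinset.card : ℝ) * ((n : ℝ) / (2 * (m : ℝ))) := by
          apply mul_le_mul_of_nonneg_right _ (by positivity)
          exact_mod_cast hScard
  linarith

/-- **Inductive step of the tree partition lemma.**  Let `k ≥ 3` and write
`⌈k/2⌉ = (k+1)/2`.  Suppose (H1) every rooted tree admits, for parameter `⌈k/2⌉`, a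
marked set of size at most `3⌈k/2⌉ − 5` splitting it into components of size at most
`n/⌈k/2⌉`, and (H2) every tree on at least `2` vertices admits one vertex whose
removal leaves components of size at most half.  Then: (a) in any graph on at most
`n` vertices, fewer than `2⌈k/2⌉` connected components can each have more than
`n/(2⌈k/2⌉)` vertices; (b) `(2⌈k/2⌉ − 1) + (3⌈k/2⌉ − 5) ≤ 3k − 5`; and hence every
rooted tree admits a marked set of size at most `3k − 5` splitting it into
components of size at most `n/k`. -/
theorem tree_partition_inductive_step (k : ℕ) (hk : 3 ≤ k)
    (H1 : ∀ (V : Type) [Fintype V] (G : SimpleGraph V) (root : V), G.IsTree →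
      ∃ M : Finset V, M.card ≤ 3 * ((k + 1) / 2) - 5 ∧
        ∀ c : (G.induce ((↑M : Set V)ᶜ)).ConnectedComponent,
          (Nat.card c.supp : ℝ) ≤ (Fintype.card V : ℝ) / (((k + 1) / 2 : ℕ) : ℝ))
    (H2 : ∀ (V : Type) [Fintype V] (G : SimpleGraph V), G.IsTree →
        2 ≤ Fintype.card V →
      ∃ v : V, ∀ c : (G.induce ({v}ᶜ : Set V)).ConnectedComponent,
        (Nat.card c.supp : ℝ) ≤ (Fintype.card V : ℝ) / 2) :
    (∀ (V : Type) [Fintype V] (G : SimpleGraph V) (n : ℕ), Fintype.card V ≤ n →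
      Nat.card {c : G.ConnectedComponent |
          (n : ℝ) / (2 * (((k + 1) / 2 : ℕ) : ℝ)) < (Nat.card c.supp : ℝ)} <
        2 * ((k + 1) / 2)) ∧
    (2 * ((k + 1) / 2) - 1) + (3 * ((k + 1) / 2) - 5) ≤ 3 * k - 5 ∧
    (∀ (V : Type) [Fintype V] (G : SimpleGraph V) (root : V), G.IsTree →
      ∃ M : Finset V, M.card ≤ 3 * k - 5 ∧
        ∀ c : (G.induce ((↑M : Set V)ᶜ)).ConnectedComponent,
          (Nat.card c.supp : ℝ) ≤ (Fintype.card V : ℝ) / (k : ℝ)) := by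
  refine ⟨fun V _ G n hn => partA ((k + 1) / 2) n (by omega) V G hn, by omega, ?_⟩
  intro V _ G root hT
  classical
  set m := (k + 1) / 2 with hm
  have hm2 : 2 ≤ m := by omega
  have hk2m : k ≤ 2 * m := by omega
  set n := Fintype.card V with hn
  obtain ⟨M₀, hM₀card, hM₀comp⟩ := H1 V G root hT
  set A : Set V := (↑M₀ : Set V)ᶜ with hA
  -- per-component splitting claim
  have claim : ∀ c : (G.induce A).ConnectedComponent, ∃ w : V,
      ∀ e : (G.induce (Subtype.val '' c.supp \ {w})).ConnectedComponent,
        (Nat.card e.supp : ℝ) ≤ (Nat.card c.supp : ℝ) / 2 := by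
    intro c
    set S : Set V := Subtype.val '' c.supp with hS
    have hcardS : Nat.card S = Nat.card c.supp := by
      rw [Nat.card_coe_set_eq, Nat.card_coe_set_eq, hS,
        Set.ncard_image_of_injective _ Subtype.val_injective]
    by_cases h2 : 2 ≤ Nat.card c.supp
    · haveI : Fintype ↥S := Fintype.ofFinite _
      have htree : (G.induce S).IsTree :=
        ⟨supp_connected c, induce_acyclic hT.IsAcyclic⟩
      have hcard2 : 2 ≤ Fintype.card ↥S := by
        rw [← Nat.card_eq_fintype_card, hcardS]; exact h2
      obtain ⟨v, hv⟩ := H2 ↥S (G.induce S) htree hcard2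
      refine ⟨↑v, ?_⟩
      intro e
      let φ : G.induce (S \ {(v : V)}) →g (G.induce S).induce ({v}ᶜ : Set ↥S) :=
        { toFun := fun x => ⟨⟨↑x, x.2.1⟩, fun hmem => x.2.2 (by
            rw [Set.mem_singleton_iff] at hmem ⊢
            exact congrArg Subtype.val hmem)⟩,
          map_rel' := fun h => h }
      have hφinj : Function.Injective φ := by
        intro x y hxy
        exact Subtype.ext (congrArg (fun z : ↥({v}ᶜ : Set ↥S) => ((z : ↥S) : V)) hxy)
      calc (Nat.card e.supp : ℝ)
          ≤ (Nat.card (e.map φ).supp : ℝ) := by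
            exact_mod_cast card_supp_le_map φ hφinj e
        _ ≤ (Fintype.card ↥S : ℝ) / 2 := hv (e.map φ)
        _ = (Nat.card c.supp : ℝ) / 2 := by
            rw [← Nat.card_eq_fintype_card, hcardS]
    · push_neg at h2
      obtain ⟨x₀, hx₀⟩ := c.exists_rep
      have hx₀c : x₀ ∈ c.supp := hx₀
      refine ⟨↑x₀, ?_⟩
      have hss : ∀ a ∈ S, ∀ b ∈ S, a = b := by
        have h1 : S.ncard ≤ 1 := by
          rw [← Nat.card_coe_set_eq, hcardS]; omega
        intro a ha b hb
        exact (Set.ncard_le_one_iff (Set.toFinite S)).mp h1 ha hb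
      intro e
      exfalso
      obtain ⟨y, -⟩ := e.exists_rep
      exact y.2.2 (hss _ y.2.1 _ ⟨x₀, hx₀c, rfl⟩)
  choose w hwsplit using claim
  -- counting big components
  haveI : Fintype ↥A := Fintype.ofFinite _
  have hAcard : Fintype.card ↥A ≤ n := by
    rw [hn]
    exact Fintype.card_le_of_injective _ Subtype.val_injective
  have hpartA := partA m n (by omega) ↥A (G.induce A) hAcard
  set bigS : Set (G.induce A).ConnectedComponent :=
    {c | (n : ℝ) / (k : ℝ) < (Nat.card c.supp : ℝ)} with hbigS
  have hkpos : (0 : ℝ) < (k : ℝ) := by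
    exact_mod_cast (by omega : 0 < k)
  have h2mk : (k : ℝ) ≤ 2 * (m : ℝ) := by exact_mod_cast hk2m
  have hdivle : (n : ℝ) / (2 * (m : ℝ)) ≤ (n : ℝ) / (k : ℝ) :=
    div_le_div_of_nonneg_left (by positivity) hkpos h2mk
  have hsub : bigS ⊆ {c : (G.induce A).ConnectedComponent |
      (n : ℝ) / (2 * (m : ℝ)) < (Nat.card c.supp : ℝ)} :=
    fun c hc => lt_of_le_of_lt hdivle hc
  have hbigcount : Nat.card bigS ≤ 2 * m - 1 := by
    have hmono : Nat.card bigS ≤ Nat.card {c : (G.induce A).ConnectedComponent |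
        (n : ℝ) / (2 * (m : ℝ)) < (Nat.card c.supp : ℝ)} := by
      rw [Nat.card_coe_set_eq, Nat.card_coe_set_eq]
      exact Set.ncard_le_ncard hsub (Set.toFinite _)
    omega
  haveI : Fintype ↥bigS := Fintype.ofFinite _
  set W : Finset V := bigS.toFinset.image w with hW
  have hWcard : W.card ≤ 2 * m - 1 := by
    refine le_trans Finset.card_image_le ?_
    rw [Set.toFinset_card, ← Nat.card_eq_fintype_card]
    exact hbigcount
  refine ⟨M₀ ∪ W, ?_, ?_⟩
  · refine le_trans (Finset.card_union_le _ _) ?_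
    omega
  · intro d
    have hBA : ∀ x : ↥((↑(M₀ ∪ W) : Set V)ᶜ), x ∈ d.supp → (x : V) ∈ A := by
      intro x _
      intro hxM₀
      exact x.2 (Finset.mem_coe.mpr (Finset.mem_union_left _ hxM₀))
    obtain ⟨c, hcmem, hccard⟩ := comp_into d hBA
    by_cases hbig : (n : ℝ) / (k : ℝ) < (Nat.card c.supp : ℝ)
    · have hwM : w c ∈ M₀ ∪ W :=
        Finset.mem_union_right _ (Finset.mem_image_of_mem w (Set.mem_toFinset.mpr hbig))
      have hT2 : ∀ x : ↥((↑(M₀ ∪ W) : Set V)ᶜ), x ∈ d.supp →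
          (x : V) ∈ Subtype.val '' c.supp \ {w c} := by
        intro x hx
        refine ⟨⟨⟨↑x, hBA x hx⟩, hcmem x hx, rfl⟩, ?_⟩
        intro hxw
        rw [Set.mem_singleton_iff] at hxw
        exact x.2 (Finset.mem_coe.mpr (hxw ▸ hwM))
      obtain ⟨e, -, hecard⟩ := comp_into d hT2
      have hsplit := hwsplit c e
      have hc' := hM₀comp c
      have hccast : (Nat.card d.supp : ℝ) ≤ (Nat.card e.supp : ℝ) := by exact_mod_cast hecard
      have hmpos : (0 : ℝ) < (m : ℝ) := by exact_mod_cast (by omega : 0 < m)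
      calc (Nat.card d.supp : ℝ) ≤ (Nat.card e.supp : ℝ) := hccast
        _ ≤ (Nat.card c.supp : ℝ) / 2 := hsplit
        _ ≤ ((n : ℝ) / (m : ℝ)) / 2 := by linarith
        _ = (n : ℝ) / (2 * (m : ℝ)) := by ring
        _ ≤ (n : ℝ) / (k : ℝ) := hdivle
    · push_neg at hbig
      calc (Nat.card d.supp : ℝ) ≤ (Nat.card c.supp : ℝ) := by exact_mod_cast hccard
        _ ≤ (n : ℝ) / (k : ℝ) := hbig
end
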